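/- Let D be a triangulated category with a t-structure 𝒰 = (U^{≤0}, U^{≥0}) with heart ℋ = U^{≤0} ∩ U^{≥0}, let m be a positive integer, and let S be a triangulated full subcategory of D such that ℋ ⊆ S and 𝒰_S = (S ∩ U^{≤0}, S ∩ U^{≥0}) is a t-structure on S. Then the assignments λ(X^{≤0}, X^{≥0}) = (S ∩ X^{≤0}, S ∩ X^{≥0}) and μ(Y^{≤0}, Y^{≥0}) = (U^{≤-m} * Y^{≤0}, Y^{≥0} * U^{≥0}) are mutually inverse, order preserving bijections between the poset of t-structures (X^{≤0}, X^{≥0}) on D with U^{≤-m} ⊆ X^{≤0} ⊆ U^{≤0} and the poset of t-structures (Y^{≤0}, Y^{≥0}) on S with S ∩ U^{≤-m} ⊆ Y^{≤0} ⊆ S ∩ U^{≤0}. -/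

import Mathlib

open CategoryTheory Category Limits Pretriangulated

universe v u

variable (D : Type u) [Category.{v} D] [Preadditive D] [HasZeroObject D]
  [HasShift D ℤ] [∀ n : ℤ, (shiftFunctor D n).Additive]
  [Pretriangulated D] [HasBinaryBiproducts D]

/-- `shiftSet D S n` is the full subcategory `S[n]`: objects isomorphic to `X⟦n⟧`
with `X ∈ S`. -/
def shiftSet (S : Set D) (n : ℤ) : Set D :=
  {A | ∃ B ∈ S, Nonempty (A ≅ B⟦n⟧)}

/-- `starSet D X Y` is `X * Y`: the class of objects `A` admitting a distinguished
triangle `X → A → Y → X[1]` with `X ∈ 𝒳` and `Y ∈ 𝒴`. -/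
def starSet (X Y : Set D) : Set D :=
  {A | ∃ (B C : D) (f : B ⟶ A) (g : A ⟶ C) (h : C ⟶ B⟦(1 : ℤ)⟧),
    B ∈ X ∧ C ∈ Y ∧ Triangle.mk f g h ∈ distTriang D}

/-- `Hom(X, Y) = 0`: every morphism from an object of `X` to an object of `Y` is zero. -/
def homZero (X Y : Set D) : Prop :=
  ∀ A ∈ X, ∀ B ∈ Y, ∀ f : A ⟶ B, f = 0

/-- a class of objects closed under isomorphisms -/
def isoClosed (S : Set D) : Prop :=
  ∀ ⦃A B : D⦄, (A ≅ B) → A ∈ S → B ∈ S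

/-- an additive full subcategory (closed under isomorphisms) which is closed under
direct summands -/
structure AdditiveClosed (S : Set D) : Prop where
  iso : isoClosed D S
  zero : ∀ Z : D, IsZero Z → Z ∈ S
  sum : ∀ A ∈ S, ∀ B ∈ S, (A ⊞ B) ∈ S
  summand : ∀ A ∈ S, ∀ (X : D) (i : X ⟶ A) (p : A ⟶ X), i ≫ p = 𝟙 X → X ∈ S

/-- a torsion pair `(U, V)` in the triangulated category `D` -/
structure IsTorsionPair (U V : Set D) : Prop where
  addU : AdditiveClosed D U
  addV : AdditiveClosed D V
  hom_zero : homZero D U V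
  cover : ∀ A : D, A ∈ starSet D U V

/-- `t₁ ≼ t₂` for torsion pairs in a triangulated category: `U₁ ⊆ U₂` and `U₁[1] ⊆ U₂`. -/
def torsLE (U₁ U₂ : Set D) : Prop :=
  U₁ ⊆ U₂ ∧ shiftSet D U₁ 1 ⊆ U₂

/-- a torsion pair `(T, F)` in an (extension-closed) full subcategory `H` of `D`:
`T` and `F` are additive subcategories of `H` closed under direct summands,
`Hom(T, F) = 0`, and every object of `H` admits a distinguished triangle
`T → X → F → T[1]` with `T ∈ 𝒯`, `F ∈ ℱ`. -/
structure IsTorsionPairIn (H T F : Set D) : Prop where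
  subT : T ⊆ H
  subF : F ⊆ H
  isoT : ∀ ⦃A B : D⦄, (A ≅ B) → A ∈ T → B ∈ H → B ∈ T
  isoF : ∀ ⦃A B : D⦄, (A ≅ B) → A ∈ F → B ∈ H → B ∈ F
  zeroT : ∀ Z : D, IsZero Z → Z ∈ H → Z ∈ T
  zeroF : ∀ Z : D, IsZero Z → Z ∈ H → Z ∈ F
  sumT : ∀ A ∈ T, ∀ B ∈ T, (A ⊞ B) ∈ T
  sumF : ∀ A ∈ F, ∀ B ∈ F, (A ⊞ B) ∈ F
  summandT : ∀ A ∈ T, ∀ (X : D) (i : X ⟶ A) (p : A ⟶ X), i ≫ p = 𝟙 X → X ∈ H → X ∈ T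
  summandF : ∀ A ∈ F, ∀ (X : D) (i : X ⟶ A) (p : A ⟶ X), i ≫ p = 𝟙 X → X ∈ H → X ∈ F
  hom_zero : homZero D T F
  cover : ∀ A ∈ H, A ∈ starSet D T F

/-- an `s`-torsion pair in `H`: a torsion pair with moreover `Hom(T, F[-1]) = 0`. -/
structure IsSTorsionPairIn (H T F : Set D) extends IsTorsionPairIn D H T F : Prop where
  neg_hom_zero : ∀ A ∈ T, ∀ B ∈ F, ∀ f : A ⟶ B⟦(-1 : ℤ)⟧, f = 0

/-- the relation `≼` for torsion pairs in a subcategory `H`: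
`Hom(T, F') = 0` and `Hom(T, F'[-1]) = 0`. -/
def torsLEIn (T F' : Set D) : Prop :=
  homZero D T F' ∧ homZero D T (shiftSet D F' (-1))

/-- a `t`-structure `(L, G) = (S^{≤0}, S^{≥0})` on a triangulated (full) subcategory `S`
of `D` (take `S = Set.univ` for a `t`-structure on `D` itself). -/
structure IsTStructureOn (S L G : Set D) : Prop where
  subL : L ⊆ S
  subG : G ⊆ S
  isoL : ∀ ⦃A B : D⦄, (A ≅ B) → A ∈ L → B ∈ S → B ∈ L
  isoG : ∀ ⦃A B : D⦄, (A ≅ B) → A ∈ G → B ∈ S → B ∈ G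
  hom_zero : homZero D L (shiftSet D G (-1))
  cover : ∀ A ∈ S, A ∈ starSet D L (shiftSet D G (-1))
  shiftL : L ⊆ shiftSet D L (-1)
  shiftG : shiftSet D G (-1) ⊆ G

/-- a `t`-structure `(L, G) = (D^{≤0}, D^{≥0})` on `D`. -/
def IsTStructure (L G : Set D) : Prop := IsTStructureOn D Set.univ L G

/-- a triangulated full subcategory of `D`. -/
structure IsTriangulatedSub (S : Set D) : Prop where
  iso : isoClosed D S
  zero : ∀ Z : D, IsZero Z → Z ∈ S
  shift : ∀ (n : ℤ), ∀ A ∈ S, A⟦n⟧ ∈ S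
  ext₂ : ∀ (T : Triangle D), (T ∈ distTriang D) → T.obj₁ ∈ S → T.obj₃ ∈ S → T.obj₂ ∈ S

/-- an `m`-extended heart on `D`: a full subcategory of the form
`V^{≥ -(m-1)} ∩ V^{≤ 0}` for some `t`-structure `(V^{≤0}, V^{≥0})` on `D`. -/
def IsExtendedHeart (m : ℤ) (E : Set D) : Prop :=
  ∃ L G : Set D, IsTStructure D L G ∧ E = shiftSet D G (m - 1) ∩ L

/-- the relation `E₁ ≤ E₂` for `m`-extended hearts:
`E₁ ⊆ E₂[m] * E₂` and `E₂ ⊆ E₁ * E₁[-m]`. -/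
def extHeartLE (m : ℤ) (E₁ E₂ : Set D) : Prop :=
  E₁ ⊆ starSet D (shiftSet D E₂ m) E₂ ∧ E₂ ⊆ starSet D E₁ (shiftSet D E₁ (-m))


/-!
Indices follow `shiftSet`: `shiftSet D L n` is `U^{≤-n}` and `shiftSet D G n` is `U^{≥-n}`.

An object lying in a bounded window `U^{≤-a} ∩ U^{≥-b}` is an iterated extension of shifted
objects of the heart, hence lies in `S`. If `U^{≤-m} ⊆ X^{≤0} ⊆ U^{≤0}`, the `X`-truncation of an
object of `U^{≤0}` has its cone in such a window; composing with the `𝒰_S`-truncation shows that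
`X`-truncations of objects of `S` stay in `S`, and every object of `X^{≤0}` is an extension of an
object of `S ∩ X^{≤0}` by one of `U^{≤-m}`. Conversely, for `μ` one truncates `A` successively
with respect to `𝒰`, to `U^{≤-m}` and to `Y`, and recognises the fibre and the cone of the
resulting composite through their `Hom`-orthogonality. As `D` is only pretriangulated, there is
no octahedral axiom: `Hom`-vanishing into cones and out of fibres of composites is derived
directly from the long exact `Hom` sequences.
-/

set_option linter.unusedSectionVars false

section ShiftsAndExtensions

open ZeroObject

variable {D}

lemma mem_shiftSet_of_iso {X : Set D} {A B : D} {n : ℤ} (hB : B ∈ X) (e : A ≅ B⟦n⟧) :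
    A ∈ shiftSet D X n :=
  ⟨B, hB, ⟨e⟩⟩

lemma shiftSet_isoClosed (X : Set D) (n : ℤ) : isoClosed D (shiftSet D X n) := by
  rintro A B e ⟨C, hC, ⟨e'⟩⟩
  exact mem_shiftSet_of_iso hC (e.symm ≪≫ e')

lemma shiftSet_mono {X Y : Set D} (h : X ⊆ Y) (n : ℤ) : shiftSet D X n ⊆ shiftSet D Y n := by
  rintro A ⟨B, hB, e⟩
  exact ⟨B, h hB, e⟩

lemma shift_mem_shiftSet {X : Set D} {A : D} (hA : A ∈ X) (n : ℤ) : A⟦n⟧ ∈ shiftSet D X n :=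
  mem_shiftSet_of_iso hA (Iso.refl _)

lemma mem_shiftSet_zero {X : Set D} {A : D} (hA : A ∈ X) : A ∈ shiftSet D X 0 :=
  mem_shiftSet_of_iso hA ((shiftFunctorZero D ℤ).app A).symm

lemma mem_shiftSet_neg_of_shift_mem {X : Set D} {A : D} {n : ℤ} (h : A⟦n⟧ ∈ X) :
    A ∈ shiftSet D X (-n) :=
  mem_shiftSet_of_iso h ((shiftFunctorCompIsoId D n (-n) (add_neg_cancel n)).app A).symm

lemma shiftSet_shiftSet (X : Set D) (a b : ℤ) :
    shiftSet D (shiftSet D X a) b = shiftSet D X (a + b) := by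
  ext A
  constructor
  · rintro ⟨B, ⟨C, hC, ⟨e⟩⟩, ⟨e'⟩⟩
    exact mem_shiftSet_of_iso hC
      (e' ≪≫ (shiftFunctor D b).mapIso e ≪≫ ((shiftFunctorAdd' D a b _ rfl).app C).symm)
  · rintro ⟨C, hC, ⟨e⟩⟩
    exact mem_shiftSet_of_iso (shift_mem_shiftSet hC a)
      (e ≪≫ (shiftFunctorAdd' D a b _ rfl).app C)

lemma mem_shiftSet_shift {X : Set D} {A : D} {n : ℤ} (h : A ∈ shiftSet D X n) {k c : ℤ}
    (hc : n + k = c) : A⟦k⟧ ∈ shiftSet D X c := by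
  rw [← hc, ← shiftSet_shiftSet]
  exact shift_mem_shiftSet h k

lemma homZero_shiftSet {X Y : Set D} (h : homZero D X Y) (n : ℤ) :
    homZero D (shiftSet D X n) (shiftSet D Y n) := by
  rintro A ⟨A₀, hA₀, ⟨eA⟩⟩ B ⟨B₀, hB₀, ⟨eB⟩⟩ f
  obtain ⟨f₀, hf₀⟩ := (shiftFunctor D n).map_surjective (eA.inv ≫ f ≫ eB.hom)
  have hf : f = eA.hom ≫ (shiftFunctor D n).map f₀ ≫ eB.inv := by simp [hf₀]
  rw [hf, h A₀ hA₀ B₀ hB₀ f₀, Functor.map_zero, zero_comp, comp_zero]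

lemma IsTriangulatedSub.univ : IsTriangulatedSub D (Set.univ : Set D) :=
  ⟨fun _ _ _ _ ↦ trivial, fun _ _ ↦ trivial, fun _ _ _ ↦ trivial, fun _ _ _ _ ↦ trivial⟩

lemma IsTriangulatedSub.mem_of_mem_shiftSet {S : Set D} (hS : IsTriangulatedSub D S) {A : D}
    {n : ℤ} (h : A ∈ shiftSet D S n) : A ∈ S := by
  obtain ⟨B, hB, ⟨e⟩⟩ := h
  exact hS.iso e.symm (hS.shift n B hB)

lemma IsTriangulatedSub.mem_shiftSet_inter {S X : Set D} (hS : IsTriangulatedSub D S) {A : D}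
    {n : ℤ} (h : A ∈ shiftSet D X n) (hA : A ∈ S) : A ∈ shiftSet D (S ∩ X) n := by
  obtain ⟨B, hB, ⟨e⟩⟩ := h
  have hBS : B ∈ S := hS.mem_of_mem_shiftSet (mem_shiftSet_neg_of_shift_mem (hS.iso e hA))
  exact mem_shiftSet_of_iso ⟨hBS, hB⟩ e

lemma distinguished_of_iso_obj₂ {X A A' Z : D} {f : X ⟶ A} {g : A ⟶ Z} {h : Z ⟶ X⟦(1 : ℤ)⟧}
    (hd : Triangle.mk f g h ∈ distTriang D) (e : A ≅ A') :
    Triangle.mk (f ≫ e.hom) (e.inv ≫ g) h ∈ distTriang D := by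
  refine isomorphic_distinguished _ hd _ ?_
  exact Triangle.isoMk _ _ (Iso.refl _) e.symm (Iso.refl _) (by simp [Triangle.mk])
    (by simp [Triangle.mk]) (by simp [Triangle.mk])

lemma starSet_isoClosed (X Y : Set D) : isoClosed D (starSet D X Y) := by
  rintro A B e ⟨P, Q, f, g, h, hP, hQ, hd⟩
  exact ⟨P, Q, f ≫ e.hom, e.inv ≫ g, h, hP, hQ, distinguished_of_iso_obj₂ hd e⟩

lemma starSet_mono {X X' Y Y' : Set D} (hX : X ⊆ X') (hY : Y ⊆ Y') :
    starSet D X Y ⊆ starSet D X' Y' := by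
  rintro A ⟨P, Q, f, g, h, hP, hQ, hd⟩
  exact ⟨P, Q, f, g, h, hX hP, hY hQ, hd⟩

lemma shiftSet_starSet_subset (X Y : Set D) (n : ℤ) :
    shiftSet D (starSet D X Y) n ⊆ starSet D (shiftSet D X n) (shiftSet D Y n) := by
  rintro A ⟨Z, ⟨B, C, f, g, h, hB, hC, hd⟩, ⟨e⟩⟩
  exact ⟨B⟦n⟧, C⟦n⟧, _, _, _, shift_mem_shiftSet hB n, shift_mem_shiftSet hC n,
    distinguished_of_iso_obj₂ (Triangle.shift_distinguished _ hd n) e.symm⟩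

lemma zero_mem_shiftSet {X : Set D} (h : (0 : D) ∈ X) (n : ℤ) : (0 : D) ∈ shiftSet D X n :=
  mem_shiftSet_of_iso h ((isZero_zero D).iso ((shiftFunctor D n).map_isZero (isZero_zero D)))

lemma mem_starSet_of_mem_left {X Y : Set D} {A : D} (hA : A ∈ X) (hY : (0 : D) ∈ Y) :
    A ∈ starSet D X Y :=
  ⟨A, 0, 𝟙 A, 0, 0, hA, hY, contractible_distinguished A⟩

lemma mem_starSet_of_mem_right {X Y : Set D} {A : D} (hX : (0 : D) ∈ X) (hA : A ∈ Y) :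
    A ∈ starSet D X Y :=
  ⟨0, A, 0, 𝟙 A, 0, hX, hA, contractible_distinguished₁ A⟩

lemma homZero_starSet_left {X Y Z : Set D} (hX : homZero D X Z) (hY : homZero D Y Z) :
    homZero D (starSet D X Y) Z := by
  rintro A ⟨P, Q, u, v, w, hP, hQ, hd⟩ B hB f
  obtain ⟨g, rfl⟩ := Triangle.yoneda_exact₂ _ hd f (hX P hP B hB (u ≫ f))
  rw [hY Q hQ B hB g]
  exact comp_zero

lemma homZero_starSet_right {X Y Z : Set D} (hX : homZero D Z X) (hY : homZero D Z Y) :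
    homZero D Z (starSet D X Y) := by
  rintro A hA B ⟨P, Q, u, v, w, hP, hQ, hd⟩ f
  obtain ⟨g, rfl⟩ := Triangle.coyoneda_exact₂ _ hd f (hY A hA Q hQ (f ≫ v))
  rw [hX A hA P hP g]
  exact zero_comp

end ShiftsAndExtensions

section Composites

variable {D}

lemma eq_zero_of_comp_mor₁_eq_zero {T : Triangle D} (hT : T ∈ distTriang D) {V : D}
    (f : V ⟶ T.obj₁) (hf : f ≫ T.mor₁ = 0) (hv : ∀ g : V ⟶ T.obj₃⟦(-1 : ℤ)⟧, g = 0) : f = 0 := by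
  obtain ⟨g, rfl⟩ := Triangle.coyoneda_exact₂ _ (inv_rot_of_distTriang _ hT) f hf
  rw [hv g]
  exact zero_comp

lemma eq_zero_of_mor₂_comp_eq_zero {T : Triangle D} (hT : T ∈ distTriang D) {V : D}
    (f : T.obj₃ ⟶ V) (hf : T.mor₂ ≫ f = 0) (hv : ∀ g : T.obj₁⟦(1 : ℤ)⟧ ⟶ V, g = 0) : f = 0 := by
  obtain ⟨g, rfl⟩ := Triangle.yoneda_exact₃ _ hT f hf
  rw [hv g]
  exact comp_zero

lemma eq_zero_of_hom_to_cone_comp {X Y A Z₁ Z₂ W T : D}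
    {f : X ⟶ Y} {q₁ : Y ⟶ Z₁} {d₁ : Z₁ ⟶ X⟦(1 : ℤ)⟧} (h₁ : Triangle.mk f q₁ d₁ ∈ distTriang D)
    {g : Y ⟶ A} {q₂ : A ⟶ Z₂} {d₂ : Z₂ ⟶ Y⟦(1 : ℤ)⟧} (h₂ : Triangle.mk g q₂ d₂ ∈ distTriang D)
    {q₃ : A ⟶ W} {d₃ : W ⟶ X⟦(1 : ℤ)⟧} (h₃ : Triangle.mk (f ≫ g) q₃ d₃ ∈ distTriang D)
    (v₁ : ∀ φ : T ⟶ Z₁, φ = 0) (v₂ : ∀ φ : T ⟶ Z₂, φ = 0) (φ : T ⟶ W) : φ = 0 := by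
  have h₃₁ : d₃ ≫ (f ≫ g)⟦(1 : ℤ)⟧' = 0 := comp_distTriang_mor_zero₃₁ _ h₃
  have hd₃f : φ ≫ d₃ ≫ f⟦(1 : ℤ)⟧' = 0 := by
    have hg : (φ ≫ d₃ ≫ f⟦(1 : ℤ)⟧') ≫ g⟦(1 : ℤ)⟧' = 0 := by
      rw [assoc, assoc, ← Functor.map_comp, h₃₁, comp_zero]
    obtain ⟨v, hv⟩ := Triangle.coyoneda_exact₁ _ h₂ _ hg
    exact hv.trans (by rw [v₂ v]; exact zero_comp)
  have hd₃ : φ ≫ d₃ = 0 := by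
    obtain ⟨w, hw⟩ := Triangle.coyoneda_exact₁ _ h₁ (φ ≫ d₃) ((assoc _ _ _).trans hd₃f)
    exact hw.trans (by rw [v₁ w]; exact zero_comp)
  obtain ⟨k₀, hk₀⟩ := Triangle.coyoneda_exact₃ _ h₃ φ hd₃
  obtain ⟨k₁, hk₁⟩ := Triangle.coyoneda_exact₂ _ h₂ k₀ (v₂ _)
  obtain ⟨k₂, hk₂⟩ := Triangle.coyoneda_exact₂ _ h₁ k₁ (v₁ _)
  have h₁₂ : (f ≫ g) ≫ q₃ = 0 := comp_distTriang_mor_zero₁₂ _ h₃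
  have hk : ∀ k : T ⟶ X, ((k ≫ f) ≫ g) ≫ q₃ = 0 := fun k ↦ by
    rw [assoc k, assoc, h₁₂, comp_zero]
  rw [hk₀, hk₁, hk₂]
  exact hk k₂

lemma eq_zero_of_hom_from_fiber_comp {P B Q Q' Q'' E V : D}
    {a : P ⟶ B} {b : B ⟶ Q} {c : Q ⟶ P⟦(1 : ℤ)⟧} (h₁ : Triangle.mk a b c ∈ distTriang D)
    {a' : Q' ⟶ Q} {b' : Q ⟶ Q''} {c' : Q'' ⟶ Q'⟦(1 : ℤ)⟧} (h₂ : Triangle.mk a' b' c' ∈ distTriang D)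
    {ε : E ⟶ B} {δ : Q'' ⟶ E⟦(1 : ℤ)⟧} (h₃ : Triangle.mk ε (b ≫ b') δ ∈ distTriang D)
    (vP : ∀ φ : P ⟶ V, φ = 0) (vQ' : ∀ φ : Q' ⟶ V, φ = 0) (φ : E ⟶ V) : φ = 0 := by
  have vanish_of_iso : ∀ {Z Z' : D} (e : Z ≅ Z'), (∀ ψ : Z ⟶ V, ψ = 0) → ∀ ψ : Z' ⟶ V, ψ = 0 :=
    fun e hZ ψ ↦ (cancel_epi e.hom).1 (by rw [hZ (e.hom ≫ ψ), comp_zero])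
  have unshift : ∀ Z : D, Z ≅ Z⟦(-1 : ℤ)⟧⟦(1 : ℤ)⟧ :=
    fun Z ↦ ((shiftFunctorCompIsoId D (-1) 1 (neg_add_cancel 1)).app Z).symm
  -- `φ` factors through `ε` once it kills `δ⟦-1⟧'`; that composite `x` is shown to vanish by
  -- peeling off `b⟦-1⟧'` and `b'⟦-1⟧'` through the triangles shifted by `-1`.
  set x : Q''⟦(-1 : ℤ)⟧ ⟶ V := δ⟦(-1 : ℤ)⟧' ≫ (shiftEquiv D (1 : ℤ)).unitIso.inv.app E ≫ φ
  have hbb' : b⟦(-1 : ℤ)⟧' ≫ b'⟦(-1 : ℤ)⟧' ≫ x = 0 := by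
    have h₂₃ : (b ≫ b') ≫ δ = 0 := comp_distTriang_mor_zero₂₃ _ h₃
    rw [← Functor.map_comp_assoc, ← Functor.map_comp_assoc, h₂₃, Functor.map_zero, zero_comp]
  have hb' : b'⟦(-1 : ℤ)⟧' ≫ x = 0 := by
    refine eq_zero_of_mor₂_comp_eq_zero (Triangle.shift_distinguished _ h₁ (-1)) _ ?_
      (vanish_of_iso (unshift P) vP)
    change ((-1 : ℤ).negOnePow • b⟦(-1 : ℤ)⟧') ≫ b'⟦(-1 : ℤ)⟧' ≫ x = 0
    rw [Linear.units_smul_comp, hbb', smul_zero]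
  have hx : x = 0 := by
    refine eq_zero_of_mor₂_comp_eq_zero (Triangle.shift_distinguished _ h₂ (-1)) _ ?_
      (vanish_of_iso (unshift Q') vQ')
    change ((-1 : ℤ).negOnePow • b'⟦(-1 : ℤ)⟧') ≫ x = 0
    rw [Linear.units_smul_comp, hb', smul_zero]
  obtain ⟨φ₁, hφ₁⟩ := Triangle.yoneda_exact₂ _ (inv_rot_of_distTriang _ h₃) φ (by
    change (-(δ⟦(-1 : ℤ)⟧' ≫ (shiftEquiv D (1 : ℤ)).unitIso.inv.app E)) ≫ φ = 0
    rw [Preadditive.neg_comp, neg_eq_zero]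
    exact (assoc _ _ _).trans hx)
  obtain ⟨φ₂, hφ₂⟩ := Triangle.yoneda_exact₂ _ h₁ φ₁ (vP _)
  obtain ⟨φ₃, hφ₃⟩ := Triangle.yoneda_exact₂ _ h₂ φ₂ (vQ' _)
  have h₁₂ : ε ≫ b ≫ b' = 0 := comp_distTriang_mor_zero₁₂ _ h₃
  have hk : ∀ k : Q'' ⟶ V, ε ≫ b ≫ b' ≫ k = 0 := fun k ↦ by
    rw [← assoc b, ← assoc ε, h₁₂, zero_comp]
  rw [hφ₁, hφ₂, hφ₃]
  exact hk φ₃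

end Composites

namespace IsTStructureOn

variable {D} {S L G : Set D}

open ZeroObject

lemma mem_aisle_of_mem_shiftSet_zero (hT : IsTStructureOn D S L G) {A : D}
    (h : A ∈ shiftSet D L 0) (hA : A ∈ S) : A ∈ L := by
  obtain ⟨B, hB, ⟨e⟩⟩ := h
  exact hT.isoL (((shiftFunctorZero D ℤ).app B).symm ≪≫ e.symm) hB hA

lemma mem_coaisle_of_mem_shiftSet_zero (hT : IsTStructureOn D S L G) {A : D}
    (h : A ∈ shiftSet D G 0) (hA : A ∈ S) : A ∈ G := by
  obtain ⟨B, hB, ⟨e⟩⟩ := h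
  exact hT.isoG (((shiftFunctorZero D ℤ).app B).symm ≪≫ e.symm) hB hA

lemma antitone_shiftSet_aisle (hT : IsTStructureOn D S L G) : Antitone (shiftSet D L) :=
  antitone_int_of_succ_le fun n ↦ by
    calc shiftSet D L (n + 1) ⊆ shiftSet D (shiftSet D L (-1)) (n + 1) := shiftSet_mono hT.shiftL _
      _ = shiftSet D L n := by rw [shiftSet_shiftSet]; congr 1; ring

lemma monotone_shiftSet_coaisle (hT : IsTStructureOn D S L G) : Monotone (shiftSet D G) :=
  monotone_int_of_le_succ fun n ↦ by
    calc shiftSet D G n = shiftSet D (shiftSet D G (-1)) (n + 1) := by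
          rw [shiftSet_shiftSet]; congr 1; ring
      _ ⊆ shiftSet D G (n + 1) := shiftSet_mono hT.shiftG _

lemma shiftSet_aisle_subset (hS : IsTriangulatedSub D S) (hT : IsTStructureOn D S L G) {n : ℤ}
    (hn : 0 ≤ n) : shiftSet D L n ⊆ L := fun _ hA ↦
  hT.mem_aisle_of_mem_shiftSet_zero (hT.antitone_shiftSet_aisle hn hA)
    (hS.mem_of_mem_shiftSet (shiftSet_mono hT.subL n hA))

lemma shift_mem_aisle (hS : IsTriangulatedSub D S) (hT : IsTStructureOn D S L G) {A : D}
    (hA : A ∈ L) : A⟦(1 : ℤ)⟧ ∈ L :=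
  hT.shiftSet_aisle_subset hS zero_le_one (shift_mem_shiftSet hA 1)

lemma homZero_shiftSet_of_lt (hT : IsTStructureOn D S L G) {a b : ℤ} (hab : b < a) :
    homZero D (shiftSet D L a) (shiftSet D G b) := fun A hA B hB ↦ by
  have hB' : B ∈ shiftSet D (shiftSet D G (-1)) a := by
    rw [shiftSet_shiftSet]
    exact hT.monotone_shiftSet_coaisle (by omega) hB
  exact homZero_shiftSet hT.hom_zero a A hA B hB'

lemma mem_starSet_shiftSet (hS : IsTriangulatedSub D S) (hT : IsTStructureOn D S L G)
    {a b : ℤ} (hab : b + 1 = a) {A : D} (hA : A ∈ S) :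
    A ∈ starSet D (shiftSet D L a) (shiftSet D G b) := by
  have h : A ∈ shiftSet D (starSet D L (shiftSet D G (-1))) a :=
    mem_shiftSet_of_iso (hT.cover _ (hS.shift (-a) A hA))
      ((shiftFunctorCompIsoId D (-a) a (neg_add_cancel a)).app A).symm
  have := shiftSet_starSet_subset _ _ a h
  rwa [shiftSet_shiftSet, show -1 + a = b by omega] at this

lemma mem_shiftSet_coaisle_of_hom_eq_zero (hS : IsTriangulatedSub D S)
    (hT : IsTStructureOn D S L G) {a b : ℤ} (hab : b + 1 = a) {A : D} (hA : A ∈ S)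
    (hv : ∀ B ∈ shiftSet D L a, ∀ f : B ⟶ A, f = 0) : A ∈ shiftSet D G b := by
  obtain ⟨P, Q, f, g, h, hP, hQ, hd⟩ := hT.mem_starSet_shiftSet hS hab hA
  have hP0 : IsZero P := by
    rw [IsZero.iff_id_eq_zero]
    refine eq_zero_of_comp_mor₁_eq_zero hd (𝟙 P) ((id_comp f).trans (hv P hP f)) fun ψ ↦ ?_
    exact hT.homZero_shiftSet_of_lt (by omega) P hP _ (mem_shiftSet_shift hQ rfl) ψ
  have : IsIso g := (Triangle.isZero₁_iff_isIso₂ _ hd).1 hP0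
  exact shiftSet_isoClosed _ _ (asIso g).symm hQ

lemma mem_shiftSet_aisle_of_hom_eq_zero (hS : IsTriangulatedSub D S)
    (hT : IsTStructureOn D S L G) {a b : ℤ} (hab : b + 1 = a) {A : D} (hA : A ∈ S)
    (hv : ∀ B ∈ shiftSet D G b, ∀ f : A ⟶ B, f = 0) : A ∈ shiftSet D L a := by
  obtain ⟨P, Q, f, g, h, hP, hQ, hd⟩ := hT.mem_starSet_shiftSet hS hab hA
  have hQ0 : IsZero Q := by
    rw [IsZero.iff_id_eq_zero]
    obtain ⟨χ, hχ⟩ := Triangle.yoneda_exact₂ _ (rot_of_distTriang _ hd) (𝟙 Q)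
      ((comp_id g).trans (hv Q hQ g))
    rw [hχ, hT.homZero_shiftSet_of_lt (by omega) _ (mem_shiftSet_shift hP rfl) Q hQ χ]
    exact comp_zero
  have : IsIso f := (Triangle.isZero₃_iff_isIso₁ _ hd).1 hQ0
  exact shiftSet_isoClosed _ _ (asIso f) hP

lemma mem_shiftSet_aisle_of_distTriang (hS : IsTriangulatedSub D S)
    (hT : IsTStructureOn D S L G) {n : ℤ} {T : Triangle D} (hd : T ∈ distTriang D)
    (h₁ : T.obj₁ ∈ shiftSet D L n) (h₃ : T.obj₃ ∈ shiftSet D L n) (h₂ : T.obj₂ ∈ S) :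
    T.obj₂ ∈ shiftSet D L n :=
  hT.mem_shiftSet_aisle_of_hom_eq_zero hS (sub_add_cancel n 1) h₂ fun B hB φ ↦ by
    obtain ⟨ψ, rfl⟩ := Triangle.yoneda_exact₂ _ hd φ
      (hT.homZero_shiftSet_of_lt (by omega) _ h₁ B hB _)
    rw [hT.homZero_shiftSet_of_lt (by omega) _ h₃ B hB ψ]
    exact comp_zero

lemma mem_shiftSet_coaisle_of_distTriang (hS : IsTriangulatedSub D S)
    (hT : IsTStructureOn D S L G) {n : ℤ} {T : Triangle D} (hd : T ∈ distTriang D)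
    (h₁ : T.obj₁ ∈ shiftSet D G n) (h₃ : T.obj₃ ∈ shiftSet D G n) (h₂ : T.obj₂ ∈ S) :
    T.obj₂ ∈ shiftSet D G n :=
  hT.mem_shiftSet_coaisle_of_hom_eq_zero hS rfl h₂ fun B hB φ ↦ by
    obtain ⟨ψ, rfl⟩ := Triangle.coyoneda_exact₂ _ hd φ
      (hT.homZero_shiftSet_of_lt (by omega) B hB _ h₃ _)
    rw [hT.homZero_shiftSet_of_lt (by omega) B hB _ h₁ ψ]
    exact zero_comp

lemma mem_aisle_of_distTriang (hS : IsTriangulatedSub D S) (hT : IsTStructureOn D S L G)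
    {T : Triangle D} (hd : T ∈ distTriang D) (h₁ : T.obj₁ ∈ L) (h₃ : T.obj₃ ∈ L)
    (h₂ : T.obj₂ ∈ S) : T.obj₂ ∈ L :=
  hT.mem_aisle_of_mem_shiftSet_zero (hT.mem_shiftSet_aisle_of_distTriang hS hd
    (mem_shiftSet_zero h₁) (mem_shiftSet_zero h₃) h₂) h₂

lemma mem_coaisle_of_distTriang (hS : IsTriangulatedSub D S) (hT : IsTStructureOn D S L G)
    {T : Triangle D} (hd : T ∈ distTriang D) (h₁ : T.obj₁ ∈ G) (h₃ : T.obj₃ ∈ G)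
    (h₂ : T.obj₂ ∈ S) : T.obj₂ ∈ G :=
  hT.mem_coaisle_of_mem_shiftSet_zero (hT.mem_shiftSet_coaisle_of_distTriang hS hd
    (mem_shiftSet_zero h₁) (mem_shiftSet_zero h₃) h₂) h₂

lemma zero_mem_aisle (hS : IsTriangulatedSub D S) (hT : IsTStructureOn D S L G) :
    (0 : D) ∈ L :=
  hT.mem_aisle_of_mem_shiftSet_zero (hT.mem_shiftSet_aisle_of_hom_eq_zero hS (neg_add_cancel 1)
    (hS.zero _ (isZero_zero D)) fun _ _ f ↦ (isZero_zero D).eq_of_src f 0)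
    (hS.zero _ (isZero_zero D))

lemma zero_mem_coaisle (hS : IsTriangulatedSub D S) (hT : IsTStructureOn D S L G) :
    (0 : D) ∈ G :=
  hT.shiftG (hT.mem_shiftSet_coaisle_of_hom_eq_zero hS (neg_add_cancel 1)
    (hS.zero _ (isZero_zero D)) fun _ _ f ↦ (isZero_zero D).eq_of_tgt f 0)

lemma shiftSet_coaisle_subset (hS : IsTriangulatedSub D S) (hT : IsTStructureOn D S L G)
    {L' G' : Set D} (hT' : IsTStructureOn D S L' G') {a b c : ℤ}
    (h : shiftSet D L a ⊆ L') (hc : a + b = c) : shiftSet D G' b ⊆ shiftSet D G c := by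
  intro A hA
  refine hT.mem_shiftSet_coaisle_of_hom_eq_zero hS rfl
    (hS.mem_of_mem_shiftSet (shiftSet_mono hT'.subG b hA)) fun B hB f ↦ ?_
  have hB' : B ∈ shiftSet D (shiftSet D L a) (b + 1) := by
    rwa [shiftSet_shiftSet, ← add_assoc, hc]
  exact hT'.homZero_shiftSet_of_lt (lt_add_one b) B (shiftSet_mono h _ hB') A hA f

lemma coaisle_subset_of_aisle_subset (hS : IsTriangulatedSub D S) (hT : IsTStructureOn D S L G)
    {L' G' : Set D} (hT' : IsTStructureOn D S L' G') (h : L ⊆ L') : G' ⊆ G := fun _ hA ↦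
  hT.mem_coaisle_of_mem_shiftSet_zero
    (hT.shiftSet_coaisle_subset hS hT' ((hT.shiftSet_aisle_subset hS le_rfl).trans h) (add_zero 0)
      (mem_shiftSet_zero hA)) (hT'.subG hA)

end IsTStructureOn

section Bijection

variable {D} {L G S : Set D} {m : ℤ}

open ZeroObject

lemma IsTriangulatedSub.mem_of_bounded (hS : IsTriangulatedSub D S)
    (hU : IsTStructureOn D Set.univ L G) (hHS : L ∩ G ⊆ S) {a b : ℤ} (hab : a ≤ b) {A : D}
    (hL : A ∈ shiftSet D L a) (hG : A ∈ shiftSet D G b) : A ∈ S := by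
  have heart : ∀ {a : ℤ} {A : D}, A ∈ shiftSet D L a → A ∈ shiftSet D G a → A ∈ S := by
    intro a A hL hG
    have hL' := mem_shiftSet_shift hL (add_neg_cancel a)
    have hG' := mem_shiftSet_shift hG (add_neg_cancel a)
    exact hS.mem_of_mem_shiftSet (mem_shiftSet_neg_of_shift_mem (hHS
      ⟨hU.mem_aisle_of_mem_shiftSet_zero hL' trivial,
        hU.mem_coaisle_of_mem_shiftSet_zero hG' trivial⟩))
  obtain ⟨k, rfl⟩ := Int.le.dest hab
  clear hab
  induction k generalizing a A with
  | zero => exact heart hL (by simpa using hG)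
  | succ k ih =>
    have hG' : A ∈ shiftSet D G (a + 1 + k) := by convert hG using 2; push_cast; ring
    obtain ⟨P, Q, f, g, h, hP, hQ, hd⟩ :=
      hU.mem_starSet_shiftSet .univ (b := a) rfl (Set.mem_univ A)
    have hQL : Q ∈ shiftSet D L a :=
      hU.mem_shiftSet_aisle_of_distTriang .univ (rot_of_distTriang _ hd) hL
        (hU.antitone_shiftSet_aisle (by omega) (mem_shiftSet_shift hP rfl)) trivial
    have hPG : P ∈ shiftSet D G (a + 1 + k) :=
      hU.mem_shiftSet_coaisle_of_distTriang .univ (inv_rot_of_distTriang _ hd)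
        (hU.monotone_shiftSet_coaisle (by omega) (mem_shiftSet_shift hQ rfl))
        hG' trivial
    exact hS.ext₂ _ hd (ih hP hPG) (heart hQL hQ)

lemma mem_starSet_of_mem_aisle (hS : IsTriangulatedSub D S) (hU : IsTStructureOn D Set.univ L G)
    (hHS : L ∩ G ⊆ S) (hm : 1 ≤ m) {A : D} (hA : A ∈ L) :
    A ∈ starSet D (shiftSet D L m) S := by
  obtain ⟨P, Q, f, g, h, hP, hQ, hd⟩ := hU.mem_starSet_shiftSet .univ (sub_add_cancel m 1) trivial
  have hQL : Q ∈ shiftSet D L 0 :=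
    hU.mem_shiftSet_aisle_of_distTriang .univ (rot_of_distTriang _ hd) (mem_shiftSet_zero hA)
      (hU.antitone_shiftSet_aisle (by omega) (mem_shiftSet_shift hP rfl)) trivial
  exact ⟨P, Q, f, g, h, hP, hS.mem_of_bounded hU hHS (by omega) hQL hQ, hd⟩

lemma IsTStructureOn.inter_of_cover (hS : IsTriangulatedSub D S) {X₁ X₂ : Set D}
    (hX : IsTStructureOn D Set.univ X₁ X₂)
    (hcover : ∀ A ∈ S, A ∈ starSet D (S ∩ X₁) (shiftSet D (S ∩ X₂) (-1))) :
    IsTStructureOn D S (S ∩ X₁) (S ∩ X₂) where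
  subL := Set.inter_subset_left
  subG := Set.inter_subset_left
  isoL _ _ e hA hB := ⟨hB, hX.isoL e hA.2 trivial⟩
  isoG _ _ e hA hB := ⟨hB, hX.isoG e hA.2 trivial⟩
  hom_zero A hA B hB := hX.hom_zero A hA.2 B (shiftSet_mono Set.inter_subset_right _ hB)
  cover := hcover
  shiftL A hA := mem_shiftSet_neg_of_shift_mem
    ⟨hS.shift 1 A hA.1, hX.shift_mem_aisle .univ hA.2⟩
  shiftG _ hA := ⟨hS.mem_of_mem_shiftSet (shiftSet_mono Set.inter_subset_left _ hA),
    hX.shiftG (shiftSet_mono Set.inter_subset_right _ hA)⟩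

section Restriction

variable {X₁ X₂ : Set D}

lemma mem_starSet_inter_of_mem (hS : IsTriangulatedSub D S) (hU : IsTStructureOn D Set.univ L G)
    (hHS : L ∩ G ⊆ S) (hUS : IsTStructureOn D S (S ∩ L) (S ∩ G)) (hm : 1 ≤ m)
    (hX : IsTStructureOn D Set.univ X₁ X₂) (hLm : shiftSet D L m ⊆ X₁) (hXL : X₁ ⊆ L)
    {A : D} (hA : A ∈ S) : A ∈ starSet D (S ∩ X₁) (shiftSet D (S ∩ X₂) (-1)) := by
  obtain ⟨B, C, i, p, dC, hB, hC, hdBC⟩ := hUS.cover A hA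
  obtain ⟨B', B'', j, q, dB, hB', hB'', hdB⟩ := hX.cover B trivial
  have hB''S : B'' ∈ S :=
    hS.mem_of_bounded hU hHS (by omega : 0 ≤ m - 1)
      (hU.mem_shiftSet_aisle_of_distTriang .univ (rot_of_distTriang _ hdB)
        (mem_shiftSet_zero hB.2) (mem_shiftSet_zero (hU.shift_mem_aisle .univ (hXL hB'))) trivial)
      (hU.shiftSet_coaisle_subset .univ hX hLm (by ring) hB'')
  have hB'S : B' ∈ S := hS.ext₂ _ (inv_rot_of_distTriang _ hdB) (hS.shift (-1) B'' hB''S) hB.1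
  obtain ⟨W, r, dW, hdW⟩ := distinguished_cocone_triangle (j ≫ i)
  have hW : W ∈ shiftSet D X₂ (-1) :=
    hX.mem_shiftSet_coaisle_of_hom_eq_zero .univ (neg_add_cancel 1) trivial fun T hT ↦
      eq_zero_of_hom_to_cone_comp hdB hdBC hdW
        (hX.homZero_shiftSet_of_lt (by norm_num) T hT B'' hB'')
        (hU.homZero_shiftSet_of_lt (by norm_num) T (shiftSet_mono hXL 0 hT) C
          (shiftSet_mono Set.inter_subset_right _ hC))
  have hWS : W ∈ S := hS.ext₂ _ (rot_of_distTriang _ hdW) hA (hS.shift 1 B' hB'S)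
  exact ⟨B', W, j ≫ i, r, dW, ⟨hB'S, hB'⟩, hS.mem_shiftSet_inter hW hWS, hdW⟩

lemma starSet_shiftSet_inter_eq (hS : IsTriangulatedSub D S)
    (hU : IsTStructureOn D Set.univ L G) (hHS : L ∩ G ⊆ S) (hm : 1 ≤ m)
    (hX : IsTStructureOn D Set.univ X₁ X₂) (hLm : shiftSet D L m ⊆ X₁) (hXL : X₁ ⊆ L) :
    starSet D (shiftSet D L m) (S ∩ X₁) = X₁ := by
  ext A
  constructor
  · rintro ⟨P, R, f, g, h, hP, hR, hd⟩
    exact hX.mem_aisle_of_distTriang .univ hd (hLm hP) hR.2 trivial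
  · intro hA
    obtain ⟨P, Q, f, g, h, hP, hQ, hd⟩ := mem_starSet_of_mem_aisle hS hU hHS hm (hXL hA)
    have hP₁ : P⟦(1 : ℤ)⟧ ∈ X₁ :=
      hLm (hU.antitone_shiftSet_aisle (by omega) (mem_shiftSet_shift hP rfl))
    exact ⟨P, Q, f, g, h, hP,
      ⟨hQ, hX.mem_aisle_of_distTriang .univ (rot_of_distTriang _ hd) hA hP₁ trivial⟩, hd⟩

lemma starSet_inter_coaisle_eq (hS : IsTriangulatedSub D S)
    (hU : IsTStructureOn D Set.univ L G) (hHS : L ∩ G ⊆ S) (hm : 1 ≤ m)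
    (hX : IsTStructureOn D Set.univ X₁ X₂) (hLm : shiftSet D L m ⊆ X₁) (hXL : X₁ ⊆ L) :
    starSet D (S ∩ X₂) G = X₂ := by
  have hGX : G ⊆ X₂ := hX.coaisle_subset_of_aisle_subset .univ hU hXL
  ext A
  constructor
  · rintro ⟨V, C, f, g, h, hV, hC, hd⟩
    exact hX.mem_coaisle_of_distTriang .univ hd hV.2 (hGX hC) trivial
  · intro hA
    obtain ⟨B, C, f, g, h, hB, hC, hd⟩ := hU.cover A trivial
    have hC' : C⟦(-1 : ℤ)⟧ ∈ shiftSet D G (-2) := mem_shiftSet_shift hC (by norm_num)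
    have hBG : B ∈ shiftSet D G m :=
      hU.mem_shiftSet_coaisle_of_distTriang .univ (inv_rot_of_distTriang _ hd)
        (hU.monotone_shiftSet_coaisle (by omega) hC')
        (hU.shiftSet_coaisle_subset .univ hX hLm (add_zero m) (mem_shiftSet_zero hA)) trivial
    have hBX : B ∈ X₂ :=
      hX.mem_coaisle_of_distTriang .univ (inv_rot_of_distTriang _ hd)
        (hGX (hU.mem_coaisle_of_mem_shiftSet_zero
          (hU.monotone_shiftSet_coaisle (by norm_num) hC') trivial)) hA trivial
    exact ⟨B, C, f, g, h, ⟨hS.mem_of_bounded hU hHS (by omega) (mem_shiftSet_zero hB) hBG, hBX⟩,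
      hU.shiftG hC, hd⟩

end Restriction

section Extension

variable {Y₁ Y₂ : Set D}

lemma shiftSet_coaisle_subset_of_inter_subset (hS : IsTriangulatedSub D S)
    (hUS : IsTStructureOn D S (S ∩ L) (S ∩ G)) (hY : IsTStructureOn D S Y₁ Y₂)
    (hmY : S ∩ shiftSet D L m ⊆ Y₁) : shiftSet D Y₂ (-1) ⊆ shiftSet D G (m - 1) := by
  have hLm : shiftSet D (S ∩ L) m ⊆ Y₁ := fun B hB ↦
    hmY ⟨hS.mem_of_mem_shiftSet (shiftSet_mono Set.inter_subset_left m hB),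
      shiftSet_mono Set.inter_subset_right m hB⟩
  exact fun A hA ↦ shiftSet_mono Set.inter_subset_right _
    (hUS.shiftSet_coaisle_subset hS hY hLm (by ring) hA)

lemma mem_starSet_of_hom_eq_zero (hS : IsTriangulatedSub D S)
    (hU : IsTStructureOn D Set.univ L G) (hHS : L ∩ G ⊆ S)
    (hUS : IsTStructureOn D S (S ∩ L) (S ∩ G)) (hm : 1 ≤ m) (hY : IsTStructureOn D S Y₁ Y₂)
    (hmY : S ∩ shiftSet D L m ⊆ Y₁) {A : D} (hA : A ∈ L)
    (hv : ∀ V ∈ shiftSet D Y₂ (-1), ∀ f : A ⟶ V, f = 0) :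
    A ∈ starSet D (shiftSet D L m) Y₁ := by
  obtain ⟨P, Q, f, g, h, hP, hQ, hd⟩ := mem_starSet_of_mem_aisle hS hU hHS hm hA
  refine ⟨P, Q, f, g, h, hP, hY.mem_aisle_of_mem_shiftSet_zero
    (hY.mem_shiftSet_aisle_of_hom_eq_zero hS (neg_add_cancel 1) hQ fun V hV φ ↦ ?_) hQ, hd⟩
  obtain ⟨ψ, rfl⟩ := Triangle.yoneda_exact₂ _ (rot_of_distTriang _ hd) φ (hv V hV (g ≫ φ))
  rw [hU.homZero_shiftSet_of_lt (by omega) _ (mem_shiftSet_shift hP rfl) V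
    (shiftSet_coaisle_subset_of_inter_subset hS hUS hY hmY hV) ψ]
  exact comp_zero

lemma mem_shiftSet_starSet_of_hom_eq_zero (hS : IsTriangulatedSub D S)
    (hU : IsTStructureOn D Set.univ L G) (hHS : L ∩ G ⊆ S) (hm : 1 ≤ m)
    (hY : IsTStructureOn D S Y₁ Y₂) (hYL : Y₁ ⊆ S ∩ L) {W : D}
    (hvL : ∀ T ∈ shiftSet D L m, ∀ f : T ⟶ W, f = 0) (hvY : ∀ T ∈ Y₁, ∀ f : T ⟶ W, f = 0) :
    W ∈ shiftSet D (starSet D Y₂ G) (-1) := by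
  have hWG : W ∈ shiftSet D G (m - 1) :=
    hU.mem_shiftSet_coaisle_of_hom_eq_zero .univ (sub_add_cancel m 1) trivial hvL
  obtain ⟨W₁, W₂, u₁, u₂, u₃, hW₁, hW₂, hd⟩ := hU.cover W trivial
  have hW₂' : W₂⟦(-1 : ℤ)⟧ ∈ shiftSet D G (-2) := mem_shiftSet_shift hW₂ (by norm_num)
  have hW₁S : W₁ ∈ S := hS.mem_of_bounded hU hHS (by omega) (mem_shiftSet_zero hW₁)
    (hU.mem_shiftSet_coaisle_of_distTriang .univ (inv_rot_of_distTriang _ hd)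
      (hU.monotone_shiftSet_coaisle (by omega) hW₂') hWG trivial)
  have hW₁Y : W₁ ∈ shiftSet D Y₂ (-1) :=
    hY.mem_shiftSet_coaisle_of_hom_eq_zero hS (neg_add_cancel 1) hW₁S fun T hT ψ ↦ by
      have hTS : T ∈ S := hS.mem_of_mem_shiftSet (shiftSet_mono hY.subL 0 hT)
      have hTY : T ∈ Y₁ := hY.mem_aisle_of_mem_shiftSet_zero hT hTS
      exact eq_zero_of_comp_mor₁_eq_zero hd ψ (hvY T hTY (ψ ≫ u₁)) fun χ ↦
        hU.homZero_shiftSet_of_lt (by norm_num) T (mem_shiftSet_zero (hYL hTY).2) _ hW₂' χ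
  have hW : W⟦(1 : ℤ)⟧ ∈ starSet D Y₂ G :=
    ⟨W₁⟦(1 : ℤ)⟧, W₂⟦(1 : ℤ)⟧, _, _, _,
      hY.mem_coaisle_of_mem_shiftSet_zero (mem_shiftSet_shift hW₁Y (neg_add_cancel 1))
        (hS.shift 1 W₁ hW₁S),
      hU.mem_coaisle_of_mem_shiftSet_zero (mem_shiftSet_shift hW₂ (neg_add_cancel 1)) trivial,
      Triangle.shift_distinguished _ hd 1⟩
  exact mem_shiftSet_neg_of_shift_mem hW

lemma mem_starSet_starSet (hS : IsTriangulatedSub D S)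
    (hU : IsTStructureOn D Set.univ L G) (hHS : L ∩ G ⊆ S)
    (hUS : IsTStructureOn D S (S ∩ L) (S ∩ G)) (hm : 1 ≤ m) (hY : IsTStructureOn D S Y₁ Y₂)
    (hmY : S ∩ shiftSet D L m ⊆ Y₁) (hYL : Y₁ ⊆ S ∩ L) (A : D) :
    A ∈ starSet D (starSet D (shiftSet D L m) Y₁) (shiftSet D (starSet D Y₂ G) (-1)) := by
  have hY₂ := shiftSet_coaisle_subset_of_inter_subset hS hUS hY hmY
  have hY₁ : ∀ {T}, T ∈ Y₁ → T ∈ shiftSet D L 0 := fun hT ↦ mem_shiftSet_zero (hYL hT).2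
  obtain ⟨B, C, i, p, dC, hB, hC, hdBC⟩ := hU.cover A trivial
  obtain ⟨P, Q, j, q, dQ, hP, hQ, hdQ⟩ := mem_starSet_of_mem_aisle hS hU hHS hm hB
  obtain ⟨Q', Q'', a', b', c', hQ', hQ'', hdY⟩ := hY.cover Q hQ
  obtain ⟨E, ε, δ, hdE⟩ := distinguished_cocone_triangle₁ (q ≫ b')
  obtain ⟨W, r, dW, hdW⟩ := distinguished_cocone_triangle (ε ≫ i)
  have hEL : E ∈ L := hU.mem_aisle_of_mem_shiftSet_zero
    (hU.mem_shiftSet_aisle_of_hom_eq_zero .univ (neg_add_cancel 1) trivial fun V hV ↦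
      eq_zero_of_hom_from_fiber_comp hdQ hdY hdE
        (hU.homZero_shiftSet_of_lt (by omega) P hP V hV)
        (hU.homZero_shiftSet_of_lt (by norm_num) Q' (hY₁ hQ') V hV)) trivial
  have hE : E ∈ starSet D (shiftSet D L m) Y₁ :=
    mem_starSet_of_hom_eq_zero hS hU hHS hUS hm hY hmY hEL fun V hV ↦
      eq_zero_of_hom_from_fiber_comp hdQ hdY hdE
        (hU.homZero_shiftSet_of_lt (by omega) P hP V (hY₂ hV)) (hY.hom_zero Q' hQ' V hV)
  have hW : W ∈ shiftSet D (starSet D Y₂ G) (-1) :=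
    mem_shiftSet_starSet_of_hom_eq_zero hS hU hHS hm hY hYL
      (fun T hT ↦ eq_zero_of_hom_to_cone_comp hdE hdBC hdW
        (hU.homZero_shiftSet_of_lt (by omega) T hT Q'' (hY₂ hQ''))
        (hU.homZero_shiftSet_of_lt (by omega) T hT C hC))
      (fun T hT ↦ eq_zero_of_hom_to_cone_comp hdE hdBC hdW (hY.hom_zero T hT Q'' hQ'')
        (hU.homZero_shiftSet_of_lt (by norm_num) T (hY₁ hT) C hC))
  exact ⟨E, W, ε ≫ i, r, dW, hE, hW, hdW⟩

lemma isTStructureOn_starSet (hS : IsTriangulatedSub D S)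
    (hU : IsTStructureOn D Set.univ L G) (hHS : L ∩ G ⊆ S)
    (hUS : IsTStructureOn D S (S ∩ L) (S ∩ G)) (hm : 1 ≤ m) (hY : IsTStructureOn D S Y₁ Y₂)
    (hmY : S ∩ shiftSet D L m ⊆ Y₁) (hYL : Y₁ ⊆ S ∩ L) :
    IsTStructureOn D Set.univ (starSet D (shiftSet D L m) Y₁) (starSet D Y₂ G) where
  subL := Set.subset_univ _
  subG := Set.subset_univ _
  isoL _ _ e hA _ := starSet_isoClosed _ _ e hA
  isoG _ _ e hA _ := starSet_isoClosed _ _ e hA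
  hom_zero A hA B hB := by
    have hY₂ := shiftSet_coaisle_subset_of_inter_subset hS hUS hY hmY
    refine homZero_starSet_left (homZero_starSet_right ?_ ?_) (homZero_starSet_right ?_ ?_) A hA
      B (shiftSet_starSet_subset _ _ _ hB)
    · exact fun T hT V hV ↦ hU.homZero_shiftSet_of_lt (by omega) T hT V (hY₂ hV)
    · exact hU.homZero_shiftSet_of_lt (by omega)
    · exact hY.hom_zero
    · exact fun T hT ↦ hU.homZero_shiftSet_of_lt (by norm_num) T (mem_shiftSet_zero (hYL hT).2)
  cover A _ := mem_starSet_starSet hS hU hHS hUS hm hY hmY hYL A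
  shiftL A hA := by
    have h := shiftSet_starSet_subset _ _ 1 (shift_mem_shiftSet hA 1)
    rw [shiftSet_shiftSet] at h
    exact mem_shiftSet_neg_of_shift_mem (starSet_mono (hU.antitone_shiftSet_aisle (by omega))
      (hY.shiftSet_aisle_subset hS zero_le_one) h)
  shiftG _ hA := starSet_mono hY.shiftG hU.shiftG (shiftSet_starSet_subset _ _ _ hA)

lemma starSet_shiftSet_aisle_subset (hU : IsTStructureOn D Set.univ L G) (hm : 0 ≤ m)
    (hYL : Y₁ ⊆ S ∩ L) : starSet D (shiftSet D L m) Y₁ ⊆ L := by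
  rintro A ⟨P, R, f, g, h, hP, hR, hd⟩
  exact hU.mem_aisle_of_distTriang .univ hd (hU.shiftSet_aisle_subset .univ hm hP) (hYL hR).2
    trivial

lemma inter_starSet_shiftSet_eq (hS : IsTriangulatedSub D S) (hU : IsTStructureOn D Set.univ L G)
    (hY : IsTStructureOn D S Y₁ Y₂) (hmY : S ∩ shiftSet D L m ⊆ Y₁) :
    S ∩ starSet D (shiftSet D L m) Y₁ = Y₁ := by
  ext A
  constructor
  · rintro ⟨hA, P, R, f, g, h, hP, hR, hd⟩
    have hPS : P ∈ S :=
      hS.ext₂ _ (inv_rot_of_distTriang _ hd) (hS.shift (-1) R (hY.subL hR)) hA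
    exact hY.mem_aisle_of_distTriang hS hd (hmY ⟨hPS, hP⟩) hR hA
  · exact fun hA ↦ ⟨hY.subL hA,
      mem_starSet_of_mem_right (zero_mem_shiftSet (hU.zero_mem_aisle .univ) m) hA⟩

lemma inter_starSet_coaisle_eq (hS : IsTriangulatedSub D S) (hU : IsTStructureOn D Set.univ L G)
    (hUS : IsTStructureOn D S (S ∩ L) (S ∩ G)) (hY : IsTStructureOn D S Y₁ Y₂)
    (hYL : Y₁ ⊆ S ∩ L) : S ∩ starSet D Y₂ G = Y₂ := by
  have hGY : S ∩ G ⊆ Y₂ := hY.coaisle_subset_of_aisle_subset hS hUS hYL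
  ext A
  constructor
  · rintro ⟨hA, V, C, f, g, h, hV, hC, hd⟩
    have hCS : C ∈ S := hS.ext₂ _ (rot_of_distTriang _ hd) hA (hS.shift 1 V (hY.subG hV))
    exact hY.mem_coaisle_of_distTriang hS hd hV (hGY ⟨hCS, hC⟩) hA
  · exact fun hA ↦ ⟨hY.subG hA, mem_starSet_of_mem_left hA (hU.zero_mem_coaisle .univ)⟩

end Extension

end Bijection

/-- Theorem 5.3: let `S` be a triangulated full subcategory of `D`
containing the heart `ℋ = U^{≤0} ∩ U^{≥0}` such that `𝒰_S = (S ∩ U^{≤0}, S ∩ U^{≥0})`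
is a `t`-structure on `S`. Then `λ(X^{≤0}, X^{≥0}) = (S ∩ X^{≤0}, S ∩ X^{≥0})` and
`μ(Y^{≤0}, Y^{≥0}) = (U^{≤-m} * Y^{≤0}, Y^{≥0} * U^{≥0})` are mutually inverse, order
preserving bijections between the poset of `t`-structures on `D` with
`U^{≤-m} ⊆ X^{≤0} ⊆ U^{≤0}` and the poset of `t`-structures on `S` with
`S ∩ U^{≤-m} ⊆ Y^{≤0} ⊆ S ∩ U^{≤0}`. -/
theorem stmt19 (L G : Set D) (hU : IsTStructure D L G) (m : ℤ) (hm : 1 ≤ m)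
    (S : Set D) (hS : IsTriangulatedSub D S) (hHS : L ∩ G ⊆ S)
    (hUS : IsTStructureOn D S (S ∩ L) (S ∩ G)) :
    -- λ is well defined and μ ∘ λ = id
    (∀ X₁ X₂, IsTStructure D X₁ X₂ → shiftSet D L m ⊆ X₁ → X₁ ⊆ L →
       IsTStructureOn D S (S ∩ X₁) (S ∩ X₂) ∧
       S ∩ shiftSet D L m ⊆ S ∩ X₁ ∧ S ∩ X₁ ⊆ S ∩ L ∧
       starSet D (shiftSet D L m) (S ∩ X₁) = X₁ ∧
       starSet D (S ∩ X₂) G = X₂) ∧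
    -- μ is well defined and λ ∘ μ = id
    (∀ Y₁ Y₂, IsTStructureOn D S Y₁ Y₂ → S ∩ shiftSet D L m ⊆ Y₁ → Y₁ ⊆ S ∩ L →
       IsTStructure D (starSet D (shiftSet D L m) Y₁) (starSet D Y₂ G) ∧
       shiftSet D L m ⊆ starSet D (shiftSet D L m) Y₁ ∧
       starSet D (shiftSet D L m) Y₁ ⊆ L ∧
       S ∩ starSet D (shiftSet D L m) Y₁ = Y₁ ∧
       S ∩ starSet D Y₂ G = Y₂) ∧
    -- λ preserves the orders (inclusion of aisles)
    (∀ X₁ X₂ X₁' X₂', IsTStructure D X₁ X₂ → IsTStructure D X₁' X₂' →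
       shiftSet D L m ⊆ X₁ → X₁ ⊆ L → shiftSet D L m ⊆ X₁' → X₁' ⊆ L →
       X₁ ⊆ X₁' → S ∩ X₁ ⊆ S ∩ X₁') ∧
    -- μ preserves the orders (inclusion of aisles)
    (∀ Y₁ Y₂ Y₁' Y₂', IsTStructureOn D S Y₁ Y₂ → IsTStructureOn D S Y₁' Y₂' →
       S ∩ shiftSet D L m ⊆ Y₁ → Y₁ ⊆ S ∩ L →
       S ∩ shiftSet D L m ⊆ Y₁' → Y₁' ⊆ S ∩ L →
       Y₁ ⊆ Y₁' → starSet D (shiftSet D L m) Y₁ ⊆ starSet D (shiftSet D L m) Y₁') := by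
  refine ⟨fun X₁ X₂ hX hLm hXL ↦ ⟨?_, Set.inter_subset_inter_right S hLm,
      Set.inter_subset_inter_right S hXL, starSet_shiftSet_inter_eq hS hU hHS hm hX hLm hXL,
      starSet_inter_coaisle_eq hS hU hHS hm hX hLm hXL⟩,
    fun Y₁ Y₂ hY hmY hYL ↦ ⟨isTStructureOn_starSet hS hU hHS hUS hm hY hmY hYL,
      fun _ hA ↦ mem_starSet_of_mem_left hA (hY.zero_mem_aisle hS),
      starSet_shiftSet_aisle_subset hU (by omega) hYL,
      inter_starSet_shiftSet_eq hS hU hY hmY, inter_starSet_coaisle_eq hS hU hUS hY hYL⟩,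
    fun _ _ _ _ _ _ _ _ _ _ h ↦ Set.inter_subset_inter_right S h,
    fun _ _ _ _ _ _ _ _ _ _ h ↦ starSet_mono subset_rfl h⟩
  exact hX.inter_of_cover hS fun A hA ↦ mem_starSet_inter_of_mem hS hU hHS hUS hm hX hLm hXL hA
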